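/- With upper-lower bound matrices Ā_{H,h} ⪰ A_H and B̄_{H,h} ⪰ B_H = A_H⁻¹, and error matrix D_h = (Ā_{H,h} − B̄_{H,h}⁻¹)/2, the guaranteed error satisfies 2 tr D_h ≤ Σ_α ‖e^(α) − e_h^(α)‖²_A + (tr A_H)² Σ_α ‖j^(α) − j_h^(α)‖²_{A⁻¹}. -/

import Mathlib

/-!
With `C := B̄⁻¹` and `D := A_H`, the upper bound `B_H ⪯ B̄` inverts to `C ⪯ D`, and the claim
becomes `tr (D - C) ≤ (tr D)² tr (C⁻¹ - D⁻¹)`. The identity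
`C⁻¹ - D⁻¹ = D⁻¹ (D - C) D⁻¹ + (D⁻¹ (D - C)) C⁻¹ ((D - C) D⁻¹)` shows
`D⁻¹ (D - C) D⁻¹ ⪯ C⁻¹ - D⁻¹`, and conjugating back by `D` costs at most a factor
`‖D‖_F² ≤ (tr D)²` in trace, by submultiplicativity of the Frobenius norm.
-/

open Matrix
open scoped MatrixOrder ComplexOrder

namespace Matrix

variable {n : Type*} [Fintype n]

theorem trace_mono {𝕜 : Type*} [RCLike 𝕜] {C D : Matrix n n 𝕜} (h : C ≤ D) :
    C.trace ≤ D.trace := by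
  simpa [trace_sub] using h.trace_nonneg

theorem le_of_forall_mulVec_dotProduct_le {A B : Matrix n n ℝ} (hA : A.IsHermitian)
    (hB : B.IsHermitian) (h : ∀ u : n → ℝ, A *ᵥ u ⬝ᵥ u ≤ B *ᵥ u ⬝ᵥ u) : A ≤ B := by
  refine PosSemidef.of_dotProduct_mulVec_nonneg (hB.sub hA) fun u ↦ ?_
  simpa [sub_mulVec, dotProduct_sub, dotProduct_comm u] using h u

theorem PosSemidef.exists_eq_transpose_mul_self {D : Matrix n n ℝ} (hD : D.PosSemidef) :
    ∃ B : Matrix n n ℝ, D = Bᵀ * B := by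
  classical
  simpa [star_eq_conjTranspose] using CStarAlgebra.nonneg_iff_eq_star_mul_self.mp hD.nonneg

section Inverse

variable [DecidableEq n]

theorem inv_sub_inv_eq {R : Type*} [CommRing R] {C D : Matrix n n R} (hC : IsUnit C.det)
    (hD : IsUnit D.det) :
    C⁻¹ - D⁻¹ = D⁻¹ * (D - C) * D⁻¹ + D⁻¹ * (D - C) * C⁻¹ * ((D - C) * D⁻¹) := by
  simp only [Matrix.mul_sub, Matrix.sub_mul, Matrix.mul_assoc, mul_nonsing_inv _ hC,
    mul_nonsing_inv _ hD, nonsing_inv_mul _ hD, nonsing_inv_mul_cancel_left (A := C) _ hC,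
    Matrix.mul_one, Matrix.one_mul]
  abel

variable {𝕜 : Type*} [RCLike 𝕜] {C D : Matrix n n 𝕜}

theorem PosDef.inv_mul_sub_mul_inv_le_inv_sub_inv (hC : C.PosDef) (hD : D.IsHermitian)
    (hD' : IsUnit D.det) : D⁻¹ * (D - C) * D⁻¹ ≤ C⁻¹ - D⁻¹ := by
  have hX : ((D - C) * D⁻¹)ᴴ = D⁻¹ * (D - C) := by
    rw [conjTranspose_mul, hD.inv.eq, (hD.sub hC.isHermitian).eq]
  rw [le_iff, inv_sub_inv_eq ((isUnit_iff_isUnit_det C).mp hC.isUnit) hD', add_sub_cancel_left]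
  simpa only [hX] using hC.inv.posSemidef.conjTranspose_mul_mul_same ((D - C) * D⁻¹)

theorem PosDef.inv_le_inv_of_le (hC : C.PosDef) (h : C ≤ D) : D⁻¹ ≤ C⁻¹ := by
  have hD : D.PosDef := by simpa using hC.add_posSemidef h
  have h0 : 0 ≤ D⁻¹ * (D - C) * D⁻¹ := by
    simpa only [hD.inv.isHermitian.eq] using (h.conjTranspose_mul_mul_same D⁻¹).nonneg
  exact sub_nonneg.mp <| h0.trans <| hC.inv_mul_sub_mul_inv_le_inv_sub_inv hD.isHermitian
    ((isUnit_iff_isUnit_det D).mp hD.isUnit)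

end Inverse

section Frobenius

attribute [local instance] frobeniusNormedAddCommGroup

theorem frobenius_norm_sq_eq_trace {m : Type*} [Fintype m] (X : Matrix m n ℝ) :
    ‖X‖ ^ 2 = (Xᵀ * X).trace := by
  rw [frobenius_norm_def, ← Real.rpow_natCast, ← Real.rpow_mul (by positivity)]
  simp [trace, mul_apply, Finset.sum_comm (γ := m), sq]

theorem PosSemidef.frobenius_norm_le_trace {D : Matrix n n ℝ} (hD : D.PosSemidef) :
    ‖D‖ ≤ D.trace := by
  obtain ⟨B, rfl⟩ := hD.exists_eq_transpose_mul_self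
  calc ‖Bᵀ * B‖ ≤ ‖Bᵀ‖ * ‖B‖ := frobenius_norm_mul _ _
    _ = (Bᵀ * B).trace := by rw [frobenius_norm_transpose, ← sq, frobenius_norm_sq_eq_trace]

theorem IsHermitian.trace_mul_mul_le {D M : Matrix n n ℝ} (hD : D.IsHermitian)
    (hM : M.PosSemidef) : (D * M * D).trace ≤ ‖D‖ ^ 2 * M.trace := by
  obtain ⟨R, rfl⟩ := hM.exists_eq_transpose_mul_self
  have hDt : Dᵀ = D := by simpa using hD.eq
  calc (D * (Rᵀ * R) * D).trace = ‖R * D‖ ^ 2 := by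
        rw [frobenius_norm_sq_eq_trace, transpose_mul, hDt]
        simp only [Matrix.mul_assoc]
    _ ≤ (‖R‖ * ‖D‖) ^ 2 := by gcongr; exact frobenius_norm_mul _ _
    _ = ‖D‖ ^ 2 * (Rᵀ * R).trace := by rw [mul_pow, frobenius_norm_sq_eq_trace, mul_comm]

theorem PosDef.trace_sub_le_sq_trace_mul_trace_inv_sub [DecidableEq n] {C D : Matrix n n ℝ}
    (hC : C.PosDef) (h : C ≤ D) : (D - C).trace ≤ D.trace ^ 2 * (C⁻¹ - D⁻¹).trace := by
  have hD : D.PosDef := by simpa using hC.add_posSemidef h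
  have hDu : IsUnit D.det := hD.det_pos.ne'.isUnit
  set M := D⁻¹ * (D - C) * D⁻¹
  have hM : M.PosSemidef := by
    simpa only [hD.inv.isHermitian.eq] using h.conjTranspose_mul_mul_same D⁻¹
  have hconj : D * M * D = D - C := by
    rw [← Matrix.mul_assoc, ← Matrix.mul_assoc, mul_nonsing_inv _ hDu, Matrix.one_mul,
      nonsing_inv_mul_cancel_right (A := D) _ hDu]
  calc (D - C).trace = (D * M * D).trace := by rw [hconj]
    _ ≤ ‖D‖ ^ 2 * M.trace := hD.isHermitian.trace_mul_mul_le hM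
    _ ≤ D.trace ^ 2 * (C⁻¹ - D⁻¹).trace := by
        gcongr
        · exact hM.trace_nonneg
        · exact hD.posSemidef.frobenius_norm_le_trace
        · exact trace_mono (hC.inv_mul_sub_mul_inv_le_inv_sub_inv hD.isHermitian hDu)

end Frobenius

end Matrix

theorem stmt_16_general {d : ℕ} (AH BH Ab Bb : Matrix (Fin d) (Fin d) ℝ)
    (hAH : AH.PosDef) (hBb : Bb.PosDef)
    (hdual : BH = AH⁻¹)
    (h2 : ∀ u : Fin d → ℝ, BH.mulVec u ⬝ᵥ u ≤ Bb.mulVec u ⬝ᵥ u)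
    (eErrSq jErrSq : Fin d → ℝ)
    (he : ∀ α, eErrSq α = Ab α α - AH α α)
    (hj : ∀ α, jErrSq α = Bb α α - BH α α)
    (Dh : Matrix (Fin d) (Fin d) ℝ) (hDh : Dh = (2:ℝ)⁻¹ • (Ab - Bb⁻¹)) :
    2 * Dh.trace ≤ (∑ α, eErrSq α) + AH.trace ^ 2 * ∑ α, jErrSq α := by
  subst hdual hDh
  have hBH : AH⁻¹ ≤ Bb :=
    le_of_forall_mulVec_dotProduct_le hAH.inv.isHermitian hBb.isHermitian h2
  have hinv : Bb⁻¹ ≤ AH := by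
    simpa only [nonsing_inv_nonsing_inv _ hAH.det_pos.ne'.isUnit] using
      hAH.inv.inv_le_inv_of_le hBH
  have key := hBb.inv.trace_sub_le_sq_trace_mul_trace_inv_sub hinv
  rw [nonsing_inv_nonsing_inv _ hBb.det_pos.ne'.isUnit, trace_sub, trace_sub] at key
  have hsum_e : ∑ α, eErrSq α = Ab.trace - AH.trace := by
    simp only [he, Finset.sum_sub_distrib]; rfl
  have hsum_j : ∑ α, jErrSq α = Bb.trace - AH⁻¹.trace := by
    simp only [hj, Finset.sum_sub_distrib]; rfl
  rw [hsum_e, hsum_j, trace_smul, trace_sub, smul_eq_mul]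
  linarith

/-- With upper-lower bound matrices `Ā ⪰ A_H`, `B̄ ⪰ B_H = A_H⁻¹` and error matrix
`D_h = (Ā − B̄⁻¹)/2`, and with the energy-error identities
`‖e^(α) − e_h^(α)‖²_A = Ā_{αα} − A_{H,αα}`, `‖j^(α) − j_h^(α)‖²_{A⁻¹} = B̄_{αα} − B_{H,αα}`,
the guaranteed error satisfies
`2 tr D_h ≤ Σ_α ‖e^(α) − e_h^(α)‖²_A + (tr A_H)² Σ_α ‖j^(α) − j_h^(α)‖²_{A⁻¹}`. -/
theorem stmt_16 {d : ℕ} (AH BH Ab Bb : Matrix (Fin d) (Fin d) ℝ)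
    (hAH : AH.PosDef) (hBH : BH.PosDef) (hAb : Ab.PosDef) (hBb : Bb.PosDef)
    (hdual : BH = AH⁻¹)
    (h1 : ∀ u : Fin d → ℝ, AH.mulVec u ⬝ᵥ u ≤ Ab.mulVec u ⬝ᵥ u)
    (h2 : ∀ u : Fin d → ℝ, BH.mulVec u ⬝ᵥ u ≤ Bb.mulVec u ⬝ᵥ u)
    (eErrSq jErrSq : Fin d → ℝ)
    (he : ∀ α, eErrSq α = Ab α α - AH α α)
    (hj : ∀ α, jErrSq α = Bb α α - BH α α)
    (Dh : Matrix (Fin d) (Fin d) ℝ) (hDh : Dh = (2:ℝ)⁻¹ • (Ab - Bb⁻¹)) :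
    2 * Dh.trace ≤ (∑ α, eErrSq α) + AH.trace ^ 2 * ∑ α, jErrSq α :=
  stmt_16_general AH BH Ab Bb hAH hBb hdual h2 eErrSq jErrSq he hj Dh hDh
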